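/- arXiv:0903.1686 — 3 statements merged into one kernel-verified Lean document; each statement's English description precedes it below -/
import Mathlib

section
/- Let F = ℂ⟨u_{ij} : 1 ≤ i,j ≤ n⟩ be the free unital associative ℂ-algebra on n² generators. The linear map φ̃_3 : M_n(F) → F defined by (a_{ij}) ↦ Σ_{i,j} a_{ij}(u_{ij} − δ_{ij}) is injective. -/
/-!
Comparing coefficients of a word `w·p` in `∑ q, a_q (u_q - c_q) = 0` (coefficients taken in the
free monoid algebra) gives `a_p(w) = ∑ q, c_q a_q(w·p)`: only the term `q = p` of `∑ q, a_q u_q`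
can produce a word ending in the letter `p`. So a nonzero coefficient of some `a_p` at `w` forces a
nonzero coefficient at the strictly longer word `w·p`, which is impossible for finitely many
finitely supported `a_q`.
-/

open Finset

theorem Finsupp.eq_zero_of_forall_ne_zero_exists_gt {ι M R α : Type*} [Finite ι] [Zero R]
    [LinearOrder α] (ℓ : M → α) (g : ι → M →₀ R)
    (h : ∀ i m, g i m ≠ 0 → ∃ j m', ℓ m < ℓ m' ∧ g j m' ≠ 0) : g = 0 := by
  classical
  have := Fintype.ofFinite ι
  by_contra hg
  obtain ⟨i₀, hi₀⟩ := Function.ne_iff.mp hg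
  obtain ⟨m₀, hm₀⟩ := Finsupp.ne_iff.mp hi₀
  set S := univ.sigma fun i => (g i).support
  have hS : S.Nonempty := ⟨⟨i₀, m₀⟩, mem_sigma.mpr ⟨mem_univ _, Finsupp.mem_support_iff.mpr hm₀⟩⟩
  obtain ⟨⟨i, m⟩, hm, hmax⟩ := S.exists_max_image (fun x => ℓ x.2) hS
  obtain ⟨j, m', hlt, hne⟩ := h i m (Finsupp.mem_support_iff.mp (mem_sigma.mp hm).2)
  exact (hmax ⟨j, m'⟩ (mem_sigma.mpr ⟨mem_univ _, Finsupp.mem_support_iff.mpr hne⟩)).not_gt hlt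

theorem FreeMonoid.eq_of_mul_of_eq_mul_of {α : Type*} {v w : FreeMonoid α} {p q : α}
    (h : v * of p = w * of q) : p = q := by
  simpa using congrArg (fun l => (toList l).getLast?) h

namespace MonoidAlgebra

variable {R X : Type*}

theorem coeff_mul_single_of_mul_of [Semiring R] [DecidableEq X] (f : R[FreeMonoid X])
    (r : R) (w : FreeMonoid X) (p q : X) :
    (f * single (FreeMonoid.of q) r).coeff (w * FreeMonoid.of p) =
      if q = p then f.coeff w * r else 0 := by
  split_ifs with hqp
  · simp [hqp]
  · exact coeff_mul_single_of_forall_mul_ne _ _ fun v hv =>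
      hqp (FreeMonoid.eq_of_mul_of_eq_mul_of hv)

theorem coeff_sum_mul_of_mul_of [Semiring R] [Fintype X] (b : X → R[FreeMonoid X])
    (w : FreeMonoid X) (p : X) :
    (∑ q, b q * of R _ (FreeMonoid.of q)).coeff (w * FreeMonoid.of p) = (b p).coeff w := by
  classical
  simp [coeff_sum, Finset.sum_apply', coeff_mul_single_of_mul_of]

theorem sum_mul_of_sub_algebraMap_injective [CommRing R] [Fintype X] (c : X → R) :
    Function.Injective fun b : X → R[FreeMonoid X] =>
      ∑ x, b x * (of R _ (FreeMonoid.of x) - algebraMap R _ (c x)) := by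
  intro b b' hbb'
  set d := b - b'
  have hd : ∑ x, d x * of R _ (FreeMonoid.of x) = ∑ x, d x * algebraMap R _ (c x) := by
    have h0 : ∑ x, d x * (of R _ (FreeMonoid.of x) - algebraMap R _ (c x)) = 0 := by
      simpa only [d, Pi.sub_apply, sub_mul, sum_sub_distrib, sub_eq_zero] using hbb'
    simpa only [mul_sub, sum_sub_distrib, sub_eq_zero] using h0
  have hrel : ∀ p w, (d p).coeff w = ∑ q, (d q).coeff (w * FreeMonoid.of p) * c q := by
    intro p w
    have := congrArg (coeff · (w * FreeMonoid.of p)) hd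
    rw [coeff_sum_mul_of_mul_of] at this
    simpa [coeff_sum, Finset.sum_apply', coeff_mul_single_one] using this
  have hcoeff : (fun p => (d p).coeff) = 0 := by
    refine Finsupp.eq_zero_of_forall_ne_zero_exists_gt FreeMonoid.length _ fun p w hw => ?_
    rw [hrel] at hw
    obtain ⟨q, -, hq⟩ := exists_ne_zero_of_sum_ne_zero hw
    exact ⟨q, w * FreeMonoid.of p, by simp, left_ne_zero_of_mul hq⟩
  funext p
  exact sub_eq_zero.mp (coeff_injective (congrFun hcoeff p))

end MonoidAlgebra

namespace FreeAlgebra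

variable {R X : Type*}

theorem equivMonoidAlgebraFreeMonoid_ι [CommSemiring R] (x : X) :
    equivMonoidAlgebraFreeMonoid (ι R x) = MonoidAlgebra.of R _ (FreeMonoid.of x) := by
  simp [equivMonoidAlgebraFreeMonoid]

theorem sum_mul_ι_sub_algebraMap_injective [CommRing R] [Fintype X] (c : X → R) :
    Function.Injective fun b : X → FreeAlgebra R X =>
      ∑ x, b x * (ι R x - algebraMap R _ (c x)) := by
  intro b b' h
  have h' := congrArg equivMonoidAlgebraFreeMonoid h
  simp only [map_sum, map_mul, map_sub, AlgEquiv.commutes, equivMonoidAlgebraFreeMonoid_ι] at h'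
  funext x
  exact equivMonoidAlgebraFreeMonoid.injective
    (congrFun (MonoidAlgebra.sum_mul_of_sub_algebraMap_injective c h') x)

end FreeAlgebra

theorem phi3_tilde_injective (n : ℕ) :
    Function.Injective (fun a : Fin n × Fin n → FreeAlgebra ℂ (Fin n × Fin n) =>
      ∑ p : Fin n × Fin n,
        a p * (FreeAlgebra.ι ℂ p - if p.1 = p.2 then 1 else 0)) := by
  have hδ (p : Fin n × Fin n) : (if p.1 = p.2 then 1 else 0 : FreeAlgebra ℂ (Fin n × Fin n)) =
      algebraMap ℂ _ (if p.1 = p.2 then 1 else 0) := by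
    split_ifs <;> simp
  simpa only [hδ] using FreeAlgebra.sum_mul_ι_sub_algebraMap_injective _
end

section
/- In the complex C_* of Theorem 1, the composition φ_2 ∘ φ_1 = 0, where φ_1 : A_o(n) → M_nA_o(n) sends 1 to Σ_{i,j}(u_{ij} − δ_{ij}) ⊗ e_{ij} and φ_2 sends e_{ij} to r_{ij} = 1⊗e_{ij} + Σ_k u_{ik}⊗e_{jk}. -/
open scoped TensorProduct
noncomputable section

inductive AoRel (n : ℕ) : FreeAlgebra ℂ (Fin n × Fin n) → FreeAlgebra ℂ (Fin n × Fin n) → Prop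
  | row (i k : Fin n) : AoRel n (∑ j, FreeAlgebra.ι ℂ (i, j) * FreeAlgebra.ι ℂ (k, j)) (if i = k then 1 else 0)
  | col (i k : Fin n) : AoRel n (∑ j, FreeAlgebra.ι ℂ (j, i) * FreeAlgebra.ι ℂ (j, k)) (if i = k then 1 else 0)

/-- The free orthogonal quantum group algebra `A_o(n)`. -/
abbrev Ao (n : ℕ) := RingQuot (AoRel n)

/-- The canonical generators `u i j` of `A_o(n)`. -/
def u (n : ℕ) (i j : Fin n) : Ao n := RingQuot.mkAlgHom ℂ (AoRel n) (FreeAlgebra.ι ℂ (i, j))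

/-- The element `r i k = 1 ⊗ e_{ik} + Σ_j u_{ij} ⊗ e_{kj}` of the free module. -/
def r (n : ℕ) (i k : Fin n) : Fin n × Fin n → Ao n :=
  fun p => (if p = (i, k) then 1 else 0) + (if p.1 = k then u n i p.2 else 0)


/-! With `U = (u i j)`, the coefficient of `e_{ab}` in `φ₂ (φ₁ 1)` is the `(a, b)` entry of
`(U - 1) + (U - 1)ᵀ U = Uᵀ U - 1`, which vanishes by the column relations of `A_o(n)`. -/

open Matrix

lemma sum_smul_ite_eq {R ι : Type*} [NonAssocSemiring R] [Fintype ι] [DecidableEq ι]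
    (C : Matrix ι ι R) :
    ∑ p : ι × ι, C p.1 p.2 • (fun q : ι × ι => if q = p then (1 : R) else 0) =
      fun q => C q.1 q.2 := by
  funext q
  simp [Finset.sum_apply]

lemma sum_smul_ite_fst_eq {R ι : Type*} [NonUnitalNonAssocSemiring R] [Fintype ι]
    [DecidableEq ι] (C V : Matrix ι ι R) :
    ∑ p : ι × ι, C p.1 p.2 • (fun q : ι × ι => if q.1 = p.2 then V p.1 q.2 else 0) =
      fun q => (Cᵀ * V) q.1 q.2 := by
  funext q
  simp [Finset.sum_apply, Fintype.sum_prod_type, Matrix.mul_apply]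

abbrev uMatrix (n : ℕ) : Matrix (Fin n) (Fin n) (Ao n) := Matrix.of (u n)

lemma transpose_uMatrix_mul_self (n : ℕ) : (uMatrix n)ᵀ * uMatrix n = 1 := by
  ext a b
  have h := RingQuot.mkAlgHom_rel ℂ (AoRel.col a b)
  simpa [u, mul_apply, one_apply, map_sum, apply_ite (RingQuot.mkAlgHom ℂ (AoRel n))] using h

theorem phi2_comp_phi1_eq_zero (n : ℕ) :
    ∑ p : Fin n × Fin n,
      (u n p.1 p.2 - if p.1 = p.2 then 1 else 0) • r n p.1 p.2 = 0 := by
  have hc : ∀ p : Fin n × Fin n,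
      (u n p.1 p.2 - if p.1 = p.2 then 1 else 0) = (uMatrix n - 1) p.1 p.2 := by
    simp [one_apply]
  have hr : ∀ p : Fin n × Fin n, r n p.1 p.2 =
      (fun q => if q = p then 1 else 0) + fun q => if q.1 = p.2 then uMatrix n p.1 q.2 else 0 :=
    fun _ => rfl
  have hzero : (uMatrix n - 1) + (uMatrix n - 1)ᵀ * uMatrix n = 0 := by
    rw [transpose_sub, transpose_one, sub_mul, transpose_uMatrix_mul_self, one_mul,
      sub_add_sub_cancel', sub_self]
  simp_rw [hc, hr, smul_add, Finset.sum_add_distrib, sum_smul_ite_eq, sum_smul_ite_fst_eq]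
  funext q
  simpa using congr_fun₂ hzero q.1 q.2
end
end

section
/- The homology of the complex 0 → ℂ →^{0} M_n(ℂ) →^{A ↦ A+Aᵗ} M_n(ℂ) →^{0} ℂ → 0 (placed in degrees 3,2,1,0) is: ℂ in degree 0, ℂ^{n(n−1)/2} in degree 1, ℂ^{n(n−1)/2} in degree 2, ℂ in degree 3, and 0 in degrees ≥ 4. Consequently H_*(A_o(n), ℂ) = Tor_*^{A_o(n)}(ℂ,ℂ) has these dimensions. -/
/-!
The kernel of `φ(A) = A + Aᵀ` consists of the skew-symmetric matrices, which are determined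
freely by their entries strictly above the diagonal (the diagonal vanishes since `2 ≠ 0`), so
it has dimension `n.choose 2 = n(n-1)/2`. Since `φ` is an endomorphism of a finite-dimensional
space, rank–nullity gives its cokernel the same dimension as its kernel.
-/

noncomputable section

/-- The linear map `A ↦ A + Aᵀ` on `n × n` complex matrices; the middle map of the
complex obtained by tensoring the resolution with the trivial module. -/
def phi (n : ℕ) : Matrix (Fin n) (Fin n) ℂ →ₗ[ℂ] Matrix (Fin n) (Fin n) ℂ where
  toFun A := A + A.transpose
  map_add' A B := by simp [Matrix.transpose_add]; abel
  map_smul' c A := by simp [Matrix.transpose_smul]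

open Module

namespace Matrix

variable {ι R : Type*} [Ring R]

variable (ι R) in
def skewSymmetricSubmodule : Submodule R (Matrix ι ι R) where
  carrier := {A | Aᵀ = -A}
  add_mem' hA hB := by simp_all [transpose_add, add_comm]
  zero_mem' := by simp
  smul_mem' c A hA := by simp_all [transpose_smul]

theorem mem_skewSymmetricSubmodule {A : Matrix ι ι R} :
    A ∈ skewSymmetricSubmodule ι R ↔ Aᵀ = -A :=
  Iff.rfl

variable [LinearOrder ι]

def skewOfUpper (f : {p : ι × ι // p.1 < p.2} → R) : Matrix ι ι R :=
  of fun i j => if h : i < j then f ⟨(i, j), h⟩ else if h' : j < i then -f ⟨(j, i), h'⟩ else 0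

theorem transpose_skewOfUpper (f : {p : ι × ι // p.1 < p.2} → R) :
    (skewOfUpper f)ᵀ = -skewOfUpper f := by
  ext i j
  simp only [transpose_apply, neg_apply, skewOfUpper, of_apply]
  rcases lt_trichotomy i j with h | rfl | h
  · simp [h, h.not_gt]
  · simp
  · simp [h, h.not_gt]

theorem skewOfUpper_upperEntries [IsAddTorsionFree R] {A : Matrix ι ι R} (hA : Aᵀ = -A) :
    skewOfUpper (fun p => A p.1.1 p.1.2) = A := by
  have hswap (i j : ι) : A j i = -A i j := congrFun (congrFun hA i) j
  ext i j
  simp only [skewOfUpper, of_apply]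
  rcases lt_trichotomy i j with h | rfl | h
  · simp [h]
  · simpa using (self_eq_neg.mp (hswap i i)).symm
  · simp [h, h.not_gt, hswap j i]

variable (ι R) in
def skewSymmetricEquivUpper [IsAddTorsionFree R] :
    skewSymmetricSubmodule ι R ≃ₗ[R] ({p : ι × ι // p.1 < p.2} → R) where
  toFun A p := A.1 p.1.1 p.1.2
  map_add' _ _ := rfl
  map_smul' _ _ := rfl
  invFun f := ⟨skewOfUpper f, transpose_skewOfUpper f⟩
  left_inv A := Subtype.ext (skewOfUpper_upperEntries A.2)
  right_inv f := funext fun p => by simp [skewOfUpper, p.2]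

theorem finrank_skewSymmetricSubmodule [Fintype ι] [StrongRankCondition R] [IsAddTorsionFree R] :
    finrank R (skewSymmetricSubmodule ι R) = (Fintype.card ι).choose 2 := by
  rw [(skewSymmetricEquivUpper ι R).finrank_eq, finrank_fintype_fun_eq_card,
    Fintype.card_subtype, Fintype.card_product_filter_lt]

end Matrix

theorem LinearMap.finrank_quotient_range_eq_finrank_ker {K V : Type*} [DivisionRing K]
    [AddCommGroup V] [Module K V] [FiniteDimensional K V] (f : V →ₗ[K] V) :
    finrank K (V ⧸ range f) = finrank K (ker f) := by
  have := (range f).finrank_quotient_add_finrank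
  have := f.finrank_range_add_finrank_ker
  omega

theorem ker_phi (n : ℕ) : LinearMap.ker (phi n) = Matrix.skewSymmetricSubmodule (Fin n) ℂ := by
  ext A
  rw [LinearMap.mem_ker, Matrix.mem_skewSymmetricSubmodule]
  exact add_eq_zero_iff_eq_neg'

/-- Homology of `0 → ℂ →0→ M_n(ℂ) →φ→ M_n(ℂ) →0→ ℂ → 0` in degrees 0, 1, 2, 3:
degree 0 is `ℂ ⧸ im 0 = ℂ`, degree 1 is `ker 0 ⧸ im φ`, degree 2 is `ker φ ⧸ im 0`,
degree 3 is `ker 0 ⊆ ℂ`. -/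
theorem homology_dims (n : ℕ) :
    Module.finrank ℂ ℂ = 1 ∧
    Module.finrank ℂ (Matrix (Fin n) (Fin n) ℂ ⧸ LinearMap.range (phi n)) = n * (n - 1) / 2 ∧
    Module.finrank ℂ (LinearMap.ker (phi n)) = n * (n - 1) / 2 ∧
    Module.finrank ℂ ℂ = 1 := by
  have hker : finrank ℂ (LinearMap.ker (phi n)) = n * (n - 1) / 2 := by
    rw [ker_phi, Matrix.finrank_skewSymmetricSubmodule, Fintype.card_fin, Nat.choose_two_right]
  refine ⟨finrank_self ℂ, ?_, hker, finrank_self ℂ⟩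
  rw [(phi n).finrank_quotient_range_eq_finrank_ker, hker]
end
end
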